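/- (Final FAPI error bound.) Let the sequence (π^t) be generated by federated API satisfying ‖V̄^t − V^{π^t}_I‖_∞ ≤ δ and ‖T^{π^{t+1}}_I V̄^t − T_I V̄^t‖_∞ ≤ ε̃ for all t. Then for every state s: limsup_{t→∞} |V̄^{π^t}(s) − max{V̄^{π*}(s), V̄^{π*_I}(s)}| ≤ (ε̃ + 2γδ)/(1−γ)² + 2γ R_max κ_1/(1−γ)², where π* is the optimal policy for the FRL objective, π*_I the optimal policy in the imaginary MDP, V̄^π = ∑_n q_n V^π_n, and κ_1 = ∑_n q_n κ_{n,I}. -/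

import Mathlib

open Finset Filter

variable {S A : Type*}

/-- A stochastic policy: for each state, a probability distribution over actions. -/
def IsPolicy [Fintype A] (pi : S → A → ℝ) : Prop :=
  (∀ s a, 0 ≤ pi s a) ∧ ∀ s, ∑ a, pi s a = 1

/-- A transition kernel: for each state-action pair, a probability distribution over states. -/
def IsKernel [Fintype S] (P : S → A → S → ℝ) : Prop :=
  (∀ s a s', 0 ≤ P s a s') ∧ ∀ s a, ∑ s', P s a s' = 1

/-- The policy Bellman operator `T^π` for kernel `P`. -/
def Tpol [Fintype S] [Fintype A] (γ : ℝ) (R : S → A → ℝ) (P : S → A → S → ℝ)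
    (pi : S → A → ℝ) (V : S → ℝ) (s : S) : ℝ :=
  ∑ a, pi s a * (R s a + γ * ∑ s', P s a s' * V s')

/-- The Bellman optimality operator `T` for kernel `P`. -/
noncomputable def Topt [Fintype S] [Fintype A] [Nonempty A] (γ : ℝ) (R : S → A → ℝ)
    (P : S → A → S → ℝ) (V : S → ℝ) (s : S) : ℝ :=
  Finset.univ.sup' Finset.univ_nonempty fun a => R s a + γ * ∑ s', P s a s' * V s'

/-- Heterogeneity measure `κ_{m,n}`: the supremum over policies `π` and states `s` of the
ℓ¹-distance between the induced state transition kernels `P_m^π(·|s)` and `P_n^π(·|s)`. -/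
noncomputable def kappa [Fintype S] [Fintype A] (Pm Pn : S → A → S → ℝ) : ℝ :=
  sSup {x : ℝ | ∃ pi : S → A → ℝ, ∃ s : S, IsPolicy pi ∧
    x = ∑ s', |(∑ a, pi s a * Pm s a s') - ∑ a, pi s a * Pn s a s'|}

/-- Sup-norm of a value function on a finite state space. -/
noncomputable def supNorm [Fintype S] [Nonempty S] (V : S → ℝ) : ℝ := ⨆ s, |V s|

variable [Fintype S] [Fintype A] [Nonempty S] [Nonempty A]

/-!
Let `V_I^t` be the value of `π^t` in the imaginary MDP with kernel `P̄ = ∑ q_n P_n`. The classical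
approximate policy iteration argument, run in the imaginary MDP, gives
`V*_I - V_I^t ≤ γ^t K + (ε̃ + 2γδ)/(1-γ)²`. Comparing the Bellman equations of one policy under
`P_n` and under `P̄` gives `|V_n^π - V_I^π| ≤ γ R_max κ_{n,I}/(1-γ)²`, so `V̄^π` lies within
`B = γ R_max κ_1/(1-γ)²` of `V_I^π`. For `π*` only the one-sided bound `V̄^{π*} ≤ V*_I + B` is
available, and it suffices: `V*_I` is a supersolution of every policy's Bellman equation. Hence
`max {V̄^{π*}, V̄^{π*_I}}` is within `B` of `V*_I`, while `V̄^{π^t}` is within `B` of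
`V_I^t ≤ V*_I`, so the gap at time `t` is at most `V*_I - V_I^t + 2B`.
-/

section WeightedSums

variable {ι : Type*} [Fintype ι] {w f : ι → ℝ} {M : ℝ}

theorem sum_mul_le_of_forall_le (hw0 : ∀ i, 0 ≤ w i) (hw1 : ∑ i, w i = 1)
    (hf : ∀ i, f i ≤ M) : ∑ i, w i * f i ≤ M :=
  calc ∑ i, w i * f i ≤ ∑ i, w i * M :=
        sum_le_sum fun i _ => mul_le_mul_of_nonneg_left (hf i) (hw0 i)
    _ = M := by rw [← sum_mul, hw1, one_mul]

theorem le_sum_mul_of_forall_le (hw0 : ∀ i, 0 ≤ w i) (hw1 : ∑ i, w i = 1)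
    (hf : ∀ i, M ≤ f i) : M ≤ ∑ i, w i * f i :=
  calc M = ∑ i, w i * M := by rw [← sum_mul, hw1, one_mul]
    _ ≤ ∑ i, w i * f i := sum_le_sum fun i _ => mul_le_mul_of_nonneg_left (hf i) (hw0 i)

theorem sum_mul_sub_eq (hw1 : ∑ i, w i = 1) (g : ℝ) :
    ∑ i, w i * f i - g = ∑ i, w i * (f i - g) := by
  simp only [mul_sub, sum_sub_distrib, ← sum_mul, hw1, one_mul]

theorem sum_mul_sub_le (hw0 : ∀ i, 0 ≤ w i) (hw1 : ∑ i, w i = 1) {g : ℝ} {b : ι → ℝ}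
    (h : ∀ i, f i - g ≤ b i) : ∑ i, w i * f i - g ≤ ∑ i, w i * b i := by
  rw [sum_mul_sub_eq hw1]
  exact sum_le_sum fun i _ => mul_le_mul_of_nonneg_left (h i) (hw0 i)

theorem abs_sum_mul_sub_le (hw0 : ∀ i, 0 ≤ w i) (hw1 : ∑ i, w i = 1) {g : ℝ} {b : ι → ℝ}
    (h : ∀ i, |f i - g| ≤ b i) : |∑ i, w i * f i - g| ≤ ∑ i, w i * b i := by
  rw [sum_mul_sub_eq hw1]
  refine (abs_sum_le_sum_abs _ _).trans (sum_le_sum fun i _ => ?_)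
  rw [abs_mul, abs_of_nonneg (hw0 i)]
  exact mul_le_mul_of_nonneg_left (h i) (hw0 i)

end WeightedSums

theorem le_div_one_sub_of_forall_le_add_mul {ι : Type*} [Finite ι] [Nonempty ι] {f : ι → ℝ}
    {a γ : ℝ} (hγ : γ < 1) (h : ∀ M, (∀ i, f i ≤ M) → ∀ i, f i ≤ a + γ * M) (i : ι) :
    f i ≤ a / (1 - γ) := by
  obtain ⟨i₀, hi₀⟩ := Finite.exists_max f
  have hmax : f i₀ ≤ a / (1 - γ) := by
    rw [le_div_iff₀ (sub_pos.2 hγ)]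
    linarith [h (f i₀) hi₀ i₀]
  exact (hi₀ i).trans hmax

theorem le_pow_mul_add_of_le_mul_add {e : ℕ → ℝ} {γ c : ℝ} (hγ0 : 0 ≤ γ) (hγ1 : γ ≠ 1)
    (h : ∀ t, e (t + 1) ≤ γ * e t + c) (t : ℕ) :
    e t ≤ γ ^ t * (e 0 - c / (1 - γ)) + c / (1 - γ) := by
  have hfix : γ * (c / (1 - γ)) + c = c / (1 - γ) := by
    field_simp [sub_ne_zero.2 hγ1.symm]
    ring
  induction t with
  | zero => simp
  | succ t ih =>
    calc e (t + 1) ≤ γ * e t + c := h t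
      _ ≤ γ * (γ ^ t * (e 0 - c / (1 - γ)) + c / (1 - γ)) + c := by gcongr
      _ = γ ^ (t + 1) * (e 0 - c / (1 - γ)) + c / (1 - γ) := by
        rw [pow_succ]
        linear_combination hfix

theorem limsup_le_of_le_pow_mul_add {x : ℕ → ℝ} {γ m K b : ℝ} (hγ0 : 0 ≤ γ) (hγ1 : γ < 1)
    (hm : ∀ t, m ≤ x t) (hx : ∀ t, x t ≤ γ ^ t * K + b) : limsup x atTop ≤ b := by
  have hlim : Tendsto (fun t => γ ^ t * K + b) atTop (nhds b) := by
    simpa using ((tendsto_pow_atTop_nhds_zero_of_lt_one hγ0 hγ1).mul_const K).add_const b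
  calc limsup x atTop ≤ limsup (fun t => γ ^ t * K + b) atTop :=
        limsup_le_limsup (Eventually.of_forall hx) (isCoboundedUnder_le_of_le atTop hm)
          hlim.isBoundedUnder_le
    _ = b := hlim.limsup_eq

theorem abs_le_supNorm (V : S → ℝ) (s : S) : |V s| ≤ supNorm V :=
  le_ciSup (Set.finite_range fun s => |V s|).bddAbove s

section PolicyEvaluation

omit [Nonempty S] [Nonempty A]

variable {γ : ℝ} {R : S → A → ℝ} {P P' : S → A → S → ℝ} {pi : S → A → ℝ}

omit [Fintype A] in
theorem IsKernel.of_eq_sum_mul {ι : Type*} [Fintype ι] {q : ι → ℝ} (hq0 : ∀ j, 0 ≤ q j)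
    (hq1 : ∑ j, q j = 1) {Q : ι → S → A → S → ℝ} (hQ : ∀ j, IsKernel (Q j))
    (hP : ∀ s a s', P s a s' = ∑ j, q j * Q j s a s') : IsKernel P := by
  refine ⟨fun s a s' => ?_, fun s a => ?_⟩
  · rw [hP]
    exact sum_nonneg fun j _ => mul_nonneg (hq0 j) ((hQ j).1 s a s')
  · simp only [hP]
    rw [sum_comm]
    simp only [← mul_sum, (hQ _).2, mul_one, hq1]

theorem Tpol_sub_Tpol (V W : S → ℝ) (s : S) :
    Tpol γ R P pi V s - Tpol γ R P pi W s =
      γ * ∑ a, pi s a * ∑ s', P s a s' * (V s' - W s') := by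
  unfold Tpol
  rw [← sum_sub_distrib, mul_sum]
  refine sum_congr rfl fun a _ => ?_
  simp only [mul_sub, sum_sub_distrib]
  ring

theorem Tpol_sub_le (hγ : 0 ≤ γ) (hP : IsKernel P) (hpi : IsPolicy pi) {V W : S → ℝ} {M : ℝ}
    (h : ∀ s, V s - W s ≤ M) (s : S) : Tpol γ R P pi V s - Tpol γ R P pi W s ≤ γ * M := by
  rw [Tpol_sub_Tpol]
  exact mul_le_mul_of_nonneg_left (sum_mul_le_of_forall_le (hpi.1 s) (hpi.2 s)
    fun a => sum_mul_le_of_forall_le (hP.1 s a) (hP.2 s a) h) hγ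

theorem Tpol_sub_Tpol_kernel (U : S → ℝ) (s : S) :
    Tpol γ R P pi U s - Tpol γ R P' pi U s =
      γ * ∑ s', (∑ a, pi s a * P s a s' - ∑ a, pi s a * P' s a s') * U s' := by
  simp only [Tpol, ← sum_sub_distrib, mul_sum, sub_mul, sum_mul]
  rw [sum_comm]
  refine sum_congr rfl fun a _ => ?_
  rw [mul_add, mul_add, add_sub_add_left_eq_sub, mul_sum, mul_sum, ← sum_sub_distrib]
  exact sum_congr rfl fun _ _ => by ring

theorem IsKernel.sum_sum_policy_mul (hP : IsKernel P) (hpi : IsPolicy pi) (s : S) :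
    ∑ s', ∑ a, pi s a * P s a s' = 1 := by
  rw [sum_comm]
  simp only [← mul_sum, hP.2, mul_one, hpi.2]

theorem sum_abs_le_kappa (hP : IsKernel P) (hP' : IsKernel P') (hpi : IsPolicy pi) (s : S) :
    ∑ s', |∑ a, pi s a * P s a s' - ∑ a, pi s a * P' s a s'| ≤ kappa P P' := by
  refine le_csSup ⟨2, ?_⟩ ⟨pi, s, hpi, rfl⟩
  rintro _ ⟨pi', s₀, hpi', rfl⟩
  have hnonneg {Q : S → A → S → ℝ} (hQ : IsKernel Q) (s' : S) :
      0 ≤ ∑ a, pi' s₀ a * Q s₀ a s' :=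
    sum_nonneg fun a _ => mul_nonneg (hpi'.1 s₀ a) (hQ.1 s₀ a s')
  calc ∑ s', |∑ a, pi' s₀ a * P s₀ a s' - ∑ a, pi' s₀ a * P' s₀ a s'|
      ≤ ∑ s', (∑ a, pi' s₀ a * P s₀ a s' + ∑ a, pi' s₀ a * P' s₀ a s') :=
        sum_le_sum fun s' _ => abs_sub_le_iff.2
          ⟨by linarith [hnonneg hP' s'], by linarith [hnonneg hP s']⟩
    _ = 2 := by
        rw [sum_add_distrib, hP.sum_sum_policy_mul hpi', hP'.sum_sum_policy_mul hpi']
        norm_num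

theorem kappa_comm (P P' : S → A → S → ℝ) : kappa P P' = kappa P' P := by
  simp only [kappa, abs_sub_comm]

theorem Tpol_sub_Tpol_kernel_le (hγ : 0 ≤ γ) (hP : IsKernel P) (hP' : IsKernel P')
    (hpi : IsPolicy pi) {U : S → ℝ} {C : ℝ} (hU : ∀ s, |U s| ≤ C) (s : S) :
    Tpol γ R P pi U s - Tpol γ R P' pi U s ≤ γ * (kappa P P' * C) := by
  rw [Tpol_sub_Tpol_kernel]
  refine mul_le_mul_of_nonneg_left ?_ hγ
  have hC : 0 ≤ C := (abs_nonneg _).trans (hU s)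
  calc _ ≤ ∑ s', |∑ a, pi s a * P s a s' - ∑ a, pi s a * P' s a s'| * C :=
        sum_le_sum fun s' _ => (le_abs_self _).trans
          ((abs_mul _ _).trans_le (mul_le_mul_of_nonneg_left (hU s') (abs_nonneg _)))
    _ ≤ kappa P P' * C := by
        rw [← sum_mul]
        exact mul_le_mul_of_nonneg_right (sum_abs_le_kappa hP hP' hpi s) hC

end PolicyEvaluation

section ValueComparison

omit [Nonempty A]

variable {γ Rmax : ℝ} {R : S → A → ℝ} {P P' : S → A → S → ℝ} {pi : S → A → ℝ}

theorem abs_le_div_of_eq_Tpol (hγ0 : 0 ≤ γ) (hγ1 : γ < 1)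
    (hR : ∀ s a, 0 ≤ R s a ∧ R s a ≤ Rmax) (hP : IsKernel P) (hpi : IsPolicy pi) {V : S → ℝ}
    (hV : ∀ s, V s = Tpol γ R P pi V s) (s : S) : |V s| ≤ Rmax / (1 - γ) := by
  have hupper : V s ≤ Rmax / (1 - γ) := by
    refine le_div_one_sub_of_forall_le_add_mul hγ1 (fun M hM u => ?_) s
    rw [hV u]
    exact sum_mul_le_of_forall_le (hpi.1 u) (hpi.2 u) fun a => add_le_add (hR u a).2
      (mul_le_mul_of_nonneg_left (sum_mul_le_of_forall_le (hP.1 u a) (hP.2 u a) hM) hγ0)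
  have hlower : -V s ≤ 0 / (1 - γ) := by
    refine le_div_one_sub_of_forall_le_add_mul (f := fun u => -V u) hγ1 (fun M hM u => ?_) s
    have hT : -(γ * M) ≤ Tpol γ R P pi V u := le_sum_mul_of_forall_le (hpi.1 u) (hpi.2 u)
      fun a => by
        have := le_sum_mul_of_forall_le (hP.1 u a) (hP.2 u a) fun s' => neg_le.1 (hM s')
        linarith [(hR u a).1, mul_le_mul_of_nonneg_left this hγ0]
    linarith [hV u]
  rw [zero_div] at hlower
  exact abs_le.2 ⟨by linarith, hupper⟩

theorem sub_le_of_le_Tpol_of_Tpol_le (hγ0 : 0 ≤ γ) (hγ1 : γ < 1) (hP : IsKernel P)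
    (hP' : IsKernel P') (hpi : IsPolicy pi) {W U : S → ℝ} {C : ℝ}
    (hW : ∀ s, W s ≤ Tpol γ R P pi W s) (hU : ∀ s, Tpol γ R P' pi U s ≤ U s)
    (hUC : ∀ s, |U s| ≤ C) (s : S) : W s - U s ≤ γ * (kappa P P' * C) / (1 - γ) :=
  le_div_one_sub_of_forall_le_add_mul (f := fun u => W u - U u) hγ1 (fun M hM u => by
    linarith [hW u, hU u, Tpol_sub_le (R := R) hγ0 hP hpi hM u,
      Tpol_sub_Tpol_kernel_le (R := R) hγ0 hP hP' hpi hUC u]) s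

theorem abs_sub_le_of_eq_Tpol (hγ0 : 0 ≤ γ) (hγ1 : γ < 1)
    (hR : ∀ s a, 0 ≤ R s a ∧ R s a ≤ Rmax) (hP : IsKernel P) (hP' : IsKernel P')
    (hpi : IsPolicy pi) {V V' : S → ℝ} (hV : ∀ s, V s = Tpol γ R P pi V s)
    (hV' : ∀ s, V' s = Tpol γ R P' pi V' s) (s : S) :
    |V s - V' s| ≤ γ * Rmax * kappa P P' / (1 - γ) ^ 2 := by
  refine abs_sub_le_iff.2 ⟨?_, ?_⟩
  · refine (sub_le_of_le_Tpol_of_Tpol_le hγ0 hγ1 hP hP' hpi (fun u => (hV u).le)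
      (fun u => (hV' u).ge) (abs_le_div_of_eq_Tpol hγ0 hγ1 hR hP' hpi hV') s).trans_eq ?_
    field_simp
  · refine (sub_le_of_le_Tpol_of_Tpol_le hγ0 hγ1 hP' hP hpi (fun u => (hV' u).le)
      (fun u => (hV u).ge) (abs_le_div_of_eq_Tpol hγ0 hγ1 hR hP hpi hV) s).trans_eq ?_
    rw [kappa_comm]
    field_simp

variable {ι : Type*} [Fintype ι] {q : ι → ℝ} {Q : ι → S → A → S → ℝ}

theorem abs_sum_mul_sub_le_of_eq_Tpol (hγ0 : 0 ≤ γ) (hγ1 : γ < 1)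
    (hR : ∀ s a, 0 ≤ R s a ∧ R s a ≤ Rmax) (hq0 : ∀ j, 0 ≤ q j) (hq1 : ∑ j, q j = 1)
    (hQ : ∀ j, IsKernel (Q j)) (hP : IsKernel P) (hpi : IsPolicy pi) {W : ι → S → ℝ}
    {U : S → ℝ} (hW : ∀ j s, W j s = Tpol γ R (Q j) pi (W j) s)
    (hU : ∀ s, U s = Tpol γ R P pi U s) (s : S) :
    |∑ j, q j * W j s - U s| ≤ γ * Rmax * (∑ j, q j * kappa (Q j) P) / (1 - γ) ^ 2 := by
  refine (abs_sum_mul_sub_le hq0 hq1 fun j =>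
    abs_sub_le_of_eq_Tpol hγ0 hγ1 hR (hQ j) hP hpi (hW j) hU s).trans_eq ?_
  rw [mul_sum, sum_div]
  exact sum_congr rfl fun j _ => by ring

theorem sum_mul_sub_le_of_Tpol_le (hγ0 : 0 ≤ γ) (hγ1 : γ < 1) (hq0 : ∀ j, 0 ≤ q j)
    (hq1 : ∑ j, q j = 1) (hQ : ∀ j, IsKernel (Q j)) (hP : IsKernel P) (hpi : IsPolicy pi)
    {W : ι → S → ℝ} {U : S → ℝ} (hW : ∀ j s, W j s = Tpol γ R (Q j) pi (W j) s)
    (hU : ∀ s, Tpol γ R P pi U s ≤ U s) (hUbd : ∀ s, |U s| ≤ Rmax / (1 - γ)) (s : S) :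
    ∑ j, q j * W j s - U s ≤ γ * Rmax * (∑ j, q j * kappa (Q j) P) / (1 - γ) ^ 2 := by
  refine (sum_mul_sub_le hq0 hq1 fun j => sub_le_of_le_Tpol_of_Tpol_le hγ0 hγ1 (hQ j) hP hpi
    (fun u => (hW j u).le) hU hUbd s).trans_eq ?_
  rw [mul_sum, sum_div]
  exact sum_congr rfl fun j _ => by field_simp

end ValueComparison

section ApproximatePolicyIteration

variable {γ : ℝ} {R : S → A → ℝ} {P : S → A → S → ℝ} {pi : S → A → ℝ}

omit [Nonempty S] in
theorem Tpol_le_Topt (hpi : IsPolicy pi) (V : S → ℝ) (s : S) :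
    Tpol γ R P pi V s ≤ Topt γ R P V s :=
  sum_mul_le_of_forall_le (hpi.1 s) (hpi.2 s) fun a =>
    le_sup' (fun a => R s a + γ * ∑ s', P s a s' * V s') (mem_univ a)

omit [Nonempty S] in
theorem Topt_sub_le (hγ : 0 ≤ γ) (hP : IsKernel P) {V W : S → ℝ} {M : ℝ}
    (h : ∀ s, V s - W s ≤ M) (s : S) : Topt γ R P V s - Topt γ R P W s ≤ γ * M := by
  unfold Topt
  refine sub_le_iff_le_add.2 (sup'_le _ _ fun a _ => ?_)
  have hexp : ∑ s', P s a s' * V s' - ∑ s', P s a s' * W s' ≤ M := by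
    rw [← sum_sub_distrib]
    simp only [← mul_sub]
    exact sum_mul_le_of_forall_le (hP.1 s a) (hP.2 s a) h
  have hW := le_sup' (fun a => R s a + γ * ∑ s', P s a s' * W s') (mem_univ a)
  linarith [mul_le_mul_of_nonneg_left hexp hγ]

omit [Nonempty S] in
theorem Topt_le_Tpol_add (hγ : 0 ≤ γ) (hP : IsKernel P) (hpi : IsPolicy pi) {V W : S → ℝ}
    {δ ε : ℝ} (hδ : ∀ s, |W s - V s| ≤ δ)
    (hε : ∀ s, |Tpol γ R P pi W s - Topt γ R P W s| ≤ ε) (s : S) :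
    Topt γ R P V s ≤ Tpol γ R P pi V s + (ε + 2 * γ * δ) := by
  have hopt := Topt_sub_le (R := R) hγ hP (fun u => (abs_sub_le_iff.1 (hδ u)).2) s
  have hpol := Tpol_sub_le (R := R) hγ hP hpi (fun u => (abs_sub_le_iff.1 (hδ u)).1) s
  have hgreedy := (abs_sub_le_iff.1 (hε s)).2
  linarith

theorem le_of_le_Topt_of_eq_Topt (hγ0 : 0 ≤ γ) (hγ1 : γ < 1) (hP : IsKernel P)
    {V Vstar : S → ℝ} (hV : ∀ s, V s ≤ Topt γ R P V s)
    (hVstar : ∀ s, Vstar s = Topt γ R P Vstar s) (s : S) : V s ≤ Vstar s := by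
  have := le_div_one_sub_of_forall_le_add_mul (f := fun u => V u - Vstar u) (a := 0) hγ1
    (fun M hM u => by linarith [hV u, hVstar u, Topt_sub_le (R := R) hγ0 hP hM u]) s
  rw [zero_div] at this
  linarith

theorem sub_le_of_Topt_le_Tpol_add (hγ0 : 0 ≤ γ) (hγ1 : γ < 1) (hP : IsKernel P)
    (hpi : IsPolicy pi) {V V' : S → ℝ} {ε : ℝ} (hV : ∀ s, V s ≤ Topt γ R P V s)
    (hV' : ∀ s, V' s = Tpol γ R P pi V' s) (hgreedy : ∀ s, Topt γ R P V s ≤ Tpol γ R P pi V s + ε)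
    (s : S) : V s - V' s ≤ ε / (1 - γ) :=
  le_div_one_sub_of_forall_le_add_mul (f := fun u => V u - V' u) hγ1 (fun M hM u => by
    linarith [hV u, hV' u, hgreedy u, Tpol_sub_le (R := R) hγ0 hP hpi hM u]) s

theorem optimal_sub_le_of_Topt_le_Tpol_add (hγ0 : 0 ≤ γ) (hγ1 : γ < 1) (hP : IsKernel P)
    (hpi : IsPolicy pi) {V V' Vstar : S → ℝ} {e ε : ℝ} (hV : ∀ s, V s ≤ Topt γ R P V s)
    (hV' : ∀ s, V' s = Tpol γ R P pi V' s) (hgreedy : ∀ s, Topt γ R P V s ≤ Tpol γ R P pi V s + ε)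
    (hVstar : ∀ s, Vstar s = Topt γ R P Vstar s) (he : ∀ s, Vstar s - V s ≤ e) (s : S) :
    Vstar s - V' s ≤ γ * e + ε / (1 - γ) := by
  have hfix : ε + γ * (ε / (1 - γ)) = ε / (1 - γ) := by
    field_simp [(sub_pos.2 hγ1).ne']
    ring
  -- `V* - V' = (T V* - T V) + (T V - T^π V) + (T^π V - T^π V')`, bounded by `γ e + ε + γ ε/(1-γ)`
  linarith [hVstar s, hV' s, hgreedy s, Topt_sub_le (R := R) hγ0 hP he s,
    Tpol_sub_le (R := R) hγ0 hP hpi (sub_le_of_Topt_le_Tpol_add hγ0 hγ1 hP hpi hV hV' hgreedy) s]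

theorem exists_optimal_sub_le_pow_mul_add (hγ0 : 0 ≤ γ) (hγ1 : γ < 1) (hP : IsKernel P)
    {pit : ℕ → S → A → ℝ} (hpit : ∀ t, IsPolicy (pit t)) {V Vbar : ℕ → S → ℝ} {δ ε : ℝ}
    (hV : ∀ t s, V t s = Tpol γ R P (pit t) (V t) s) (hδ : ∀ t s, |Vbar t s - V t s| ≤ δ)
    (hε : ∀ t s, |Tpol γ R P (pit (t + 1)) (Vbar t) s - Topt γ R P (Vbar t) s| ≤ ε)
    {Vstar : S → ℝ} (hVstar : ∀ s, Vstar s = Topt γ R P Vstar s) :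
    ∃ K, ∀ t s, Vstar s - V t s ≤ γ ^ t * K + (ε + 2 * γ * δ) / (1 - γ) ^ 2 := by
  let e (t : ℕ) : ℝ := univ.sup' univ_nonempty fun s => Vstar s - V t s
  have hle (t : ℕ) (s : S) : Vstar s - V t s ≤ e t :=
    le_sup' (fun s => Vstar s - V t s) (mem_univ s)
  have hrec (t : ℕ) : e (t + 1) ≤ γ * e t + (ε + 2 * γ * δ) / (1 - γ) :=
    sup'_le _ _ fun s _ => optimal_sub_le_of_Topt_le_Tpol_add hγ0 hγ1 hP (hpit (t + 1))
      (fun u => (hV t u).trans_le (Tpol_le_Topt (hpit t) _ u)) (hV (t + 1))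
      (Topt_le_Tpol_add hγ0 hP (hpit (t + 1)) (hδ t) (hε t)) hVstar (hle t) s
  refine ⟨e 0 - (ε + 2 * γ * δ) / (1 - γ) / (1 - γ), fun t s => (hle t s).trans ?_⟩
  rw [sq, ← div_div]
  exact le_pow_mul_add_of_le_mul_add hγ0 hγ1.ne hrec t

end ApproximatePolicyIteration

theorem stmt19_general (N : ℕ) (γ Rmax δ εt : ℝ) (hγ0 : 0 < γ) (hγ1 : γ < 1)
    (R : S → A → ℝ) (hR : ∀ s a, 0 ≤ R s a ∧ R s a ≤ Rmax)
    (q : Fin N → ℝ) (hq0 : ∀ n, 0 ≤ q n) (hq1 : ∑ n, q n = 1)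
    (P : Fin N → S → A → S → ℝ) (hP : ∀ n, IsKernel (P n))
    (Pbar : S → A → S → ℝ) (hPbar : ∀ s a s', Pbar s a s' = ∑ j, q j * P j s a s')
    -- the sequence of global policies and their value functions
    (pit : ℕ → S → A → ℝ) (hpit : ∀ t, IsPolicy (pit t))
    (Vn : ℕ → Fin N → S → ℝ)
    (hVn : ∀ t n s, Vn t n s = Tpol γ R (P n) (pit t) (Vn t n) s)
    (VI : ℕ → S → ℝ) (hVI : ∀ t s, VI t s = Tpol γ R Pbar (pit t) (VI t) s)
    (Vbar : ℕ → S → ℝ)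
    (hδ : ∀ t, supNorm (fun s => Vbar t s - VI t s) ≤ δ)
    (hε : ∀ t, supNorm
      (fun s => Tpol γ R Pbar (pit (t + 1)) (Vbar t) s - Topt γ R Pbar (Vbar t) s) ≤ εt)
    -- π*, the optimal policy for the FRL objective
    (pistar : S → A → ℝ) (hpistar : IsPolicy pistar)
    (Vstarn : Fin N → S → ℝ)
    (hVstarn : ∀ n s, Vstarn n s = Tpol γ R (P n) pistar (Vstarn n) s)
    -- π*_I, the optimal policy of the imaginary MDP
    (pistarI : S → A → ℝ) (hpistarI : IsPolicy pistarI)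
    (VIstar : S → ℝ) (hVIstar : ∀ s, VIstar s = Tpol γ R Pbar pistarI VIstar s)
    (hVIstarOpt : ∀ s, VIstar s = Topt γ R Pbar VIstar s)
    (VstarIn : Fin N → S → ℝ)
    (hVstarIn : ∀ n s, VstarIn n s = Tpol γ R (P n) pistarI (VstarIn n) s) :
    ∀ s, limsup (fun t => |(∑ n, q n * Vn t n s) -
        max (∑ n, q n * Vstarn n s) (∑ n, q n * VstarIn n s)|) atTop ≤
      (εt + 2 * γ * δ) / (1 - γ) ^ 2 +
        2 * γ * Rmax * (∑ n, q n * kappa (P n) Pbar) / (1 - γ) ^ 2 := by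
  intro s
  have hPbarK : IsKernel Pbar := IsKernel.of_eq_sum_mul hq0 hq1 hP hPbar
  obtain ⟨K, hK⟩ := exists_optimal_sub_le_pow_mul_add hγ0.le hγ1 hPbarK hpit hVI
    (fun t u => (abs_le_supNorm _ u).trans (hδ t)) (fun t u => (abs_le_supNorm _ u).trans (hε t))
    hVIstarOpt
  set B := γ * Rmax * (∑ n, q n * kappa (P n) Pbar) / (1 - γ) ^ 2 with hB
  have hgap (t : ℕ) : |∑ n, q n * Vn t n s - VI t s| ≤ B := abs_sum_mul_sub_le_of_eq_Tpol hγ0.le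
    hγ1 hR hq0 hq1 hP hPbarK (hpit t) (hVn t) (hVI t) s
  have hgapI : |∑ n, q n * VstarIn n s - VIstar s| ≤ B := abs_sum_mul_sub_le_of_eq_Tpol hγ0.le
    hγ1 hR hq0 hq1 hP hPbarK hpistarI hVstarIn hVIstar s
  have hstar : ∑ n, q n * Vstarn n s - VIstar s ≤ B := sum_mul_sub_le_of_Tpol_le hγ0.le hγ1 hq0
    hq1 hP hPbarK hpistar hVstarn (fun u => (Tpol_le_Topt hpistar _ u).trans (hVIstarOpt u).ge)
    (abs_le_div_of_eq_Tpol hγ0.le hγ1 hR hPbarK hpistarI hVIstar) s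
  have hVI_le (t : ℕ) : VI t s ≤ VIstar s := le_of_le_Topt_of_eq_Topt hγ0.le hγ1 hPbarK
    (fun u => (hVI t u).trans_le (Tpol_le_Topt (hpit t) _ u)) hVIstarOpt s
  have hmax_le : max (∑ n, q n * Vstarn n s) (∑ n, q n * VstarIn n s) ≤ VIstar s + B :=
    max_le (by linarith) (by linarith [(abs_le.1 hgapI).2])
  have hmax_ge : VIstar s - B ≤ max (∑ n, q n * Vstarn n s) (∑ n, q n * VstarIn n s) :=
    le_max_of_le_right (by linarith [(abs_le.1 hgapI).1])
  rw [show 2 * γ * Rmax * (∑ n, q n * kappa (P n) Pbar) / (1 - γ) ^ 2 = 2 * B by rw [hB]; ring]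
  refine limsup_le_of_le_pow_mul_add hγ0.le hγ1 (fun t => abs_nonneg _) (K := K) fun t => ?_
  rw [abs_le]
  constructor <;> linarith [abs_le.1 (hgap t), hK t s, hVI_le t]

theorem stmt19 (N : ℕ) (γ Rmax δ εt : ℝ) (hγ0 : 0 < γ) (hγ1 : γ < 1)
    (R : S → A → ℝ) (hR : ∀ s a, 0 ≤ R s a ∧ R s a ≤ Rmax)
    (q : Fin N → ℝ) (hq0 : ∀ n, 0 ≤ q n) (hq1 : ∑ n, q n = 1)
    (P : Fin N → S → A → S → ℝ) (hP : ∀ n, IsKernel (P n))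
    (Pbar : S → A → S → ℝ) (hPbar : ∀ s a s', Pbar s a s' = ∑ j, q j * P j s a s')
    (μ : S → ℝ) (hμ0 : ∀ s, 0 ≤ μ s) (hμ1 : ∑ s, μ s = 1)
    -- the sequence of global policies and their value functions
    (pit : ℕ → S → A → ℝ) (hpit : ∀ t, IsPolicy (pit t))
    (Vn : ℕ → Fin N → S → ℝ)
    (hVn : ∀ t n s, Vn t n s = Tpol γ R (P n) (pit t) (Vn t n) s)
    (VI : ℕ → S → ℝ) (hVI : ∀ t s, VI t s = Tpol γ R Pbar (pit t) (VI t) s)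
    (Vbar : ℕ → S → ℝ)
    (hδ : ∀ t, supNorm (fun s => Vbar t s - VI t s) ≤ δ)
    (hε : ∀ t, supNorm
      (fun s => Tpol γ R Pbar (pit (t + 1)) (Vbar t) s - Topt γ R Pbar (Vbar t) s) ≤ εt)
    -- π*, the optimal policy for the FRL objective
    (pistar : S → A → ℝ) (hpistar : IsPolicy pistar)
    (Vstarn : Fin N → S → ℝ)
    (hVstarn : ∀ n s, Vstarn n s = Tpol γ R (P n) pistar (Vstarn n) s)
    (hopt : ∀ pi' : S → A → ℝ, IsPolicy pi' → ∀ W : Fin N → S → ℝ,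
      (∀ n s, W n s = Tpol γ R (P n) pi' (W n) s) →
      ∑ s, μ s * ∑ n, q n * W n s ≤ ∑ s, μ s * ∑ n, q n * Vstarn n s)
    -- π*_I, the optimal policy of the imaginary MDP
    (pistarI : S → A → ℝ) (hpistarI : IsPolicy pistarI)
    (VIstar : S → ℝ) (hVIstar : ∀ s, VIstar s = Tpol γ R Pbar pistarI VIstar s)
    (hVIstarOpt : ∀ s, VIstar s = Topt γ R Pbar VIstar s)
    (VstarIn : Fin N → S → ℝ)
    (hVstarIn : ∀ n s, VstarIn n s = Tpol γ R (P n) pistarI (VstarIn n) s) :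
    ∀ s, limsup (fun t => |(∑ n, q n * Vn t n s) -
        max (∑ n, q n * Vstarn n s) (∑ n, q n * VstarIn n s)|) atTop ≤
      (εt + 2 * γ * δ) / (1 - γ) ^ 2 +
        2 * γ * Rmax * (∑ n, q n * kappa (P n) Pbar) / (1 - γ) ^ 2 :=
  stmt19_general N γ Rmax δ εt hγ0 hγ1 R hR q hq0 hq1 P hP Pbar hPbar pit hpit Vn hVn VI hVI Vbar hδ
    hε pistar hpistar Vstarn hVstarn pistarI hpistarI VIstar hVIstar hVIstarOpt VstarIn hVstarIn
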